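/- Suppose a rational function f ∈ k̄(t) together with nonzero elements α₁, …, α_s ∈ k̄ and rational functions μ₁, …, μ_s ∈ 𝔽_q(t) (viewed inside k̄(t) via the inclusion 𝔽_q ⊆ k̄) satisfies the σ-difference equation (t − θ)·f^{(-1)} − f = Σ_{i=1}^{s} μ_i · α_i^{(-1)} · (t − θ). Then the twisted rational function f^{(-1)} is regular at t = θ. -/

import Mathlib

open Polynomial

/-!
If `f⁽⁻¹⁾` had a pole at `θ`, it would have one at every `θ^(q^j)`. Indeed, the right-hand side
of the equation is regular at each `θ^(q^(j+1))`, because `θ` is transcendental over `𝔽_q`; so if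
`f⁽⁻¹⁾` were regular at `θ^(q^(j+1))`, then so would be `f = (t − θ)·f⁽⁻¹⁾ − (right-hand side)`,
and twisting, `f⁽⁻¹⁾` would be regular at `θ^(q^j)`. But these infinitely many distinct points
cannot all be roots of the denominator of `f⁽⁻¹⁾`.
-/

/-- The ring homomorphism `K(t) → L(t)` applying a field embedding `c : K → L` to all
coefficients of the numerator and denominator of a rational function. -/
noncomputable def RatFunc.coeffMap {K L : Type*} [Field K] [Field L] (c : K →+* L) :
    RatFunc K →+* RatFunc L :=
  RatFunc.mapRingHom (Polynomial.mapRingHom c)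
    (nonZeroDivisors_le_comap_nonZeroDivisors_of_injective _
      (Polynomial.map_injective _ c.injective))

namespace RatFunc

variable {K L : Type*} [Field K] [Field L]

def regularAt (b : K) : Subring (RatFunc K) where
  carrier := {x | ∃ P Q : K[X], Q.eval b ≠ 0 ∧
    x = algebraMap K[X] (RatFunc K) P / algebraMap K[X] (RatFunc K) Q}
  one_mem' := ⟨1, 1, by simp, by simp⟩
  zero_mem' := ⟨0, 1, by simp, by simp⟩
  neg_mem' := by
    rintro _ ⟨P, Q, hQ, rfl⟩
    exact ⟨-P, Q, hQ, by rw [map_neg, neg_div]⟩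
  mul_mem' := by
    rintro _ _ ⟨P₁, Q₁, hQ₁, rfl⟩ ⟨P₂, Q₂, hQ₂, rfl⟩
    exact ⟨P₁ * P₂, Q₁ * Q₂, by simp [hQ₁, hQ₂], by rw [div_mul_div_comm, map_mul, map_mul]⟩
  add_mem' := by
    rintro _ _ ⟨P₁, Q₁, hQ₁, rfl⟩ ⟨P₂, Q₂, hQ₂, rfl⟩
    have hQ₁0 : Q₁ ≠ 0 := by rintro rfl; simp at hQ₁
    have hQ₂0 : Q₂ ≠ 0 := by rintro rfl; simp at hQ₂
    refine ⟨P₁ * Q₂ + Q₁ * P₂, Q₁ * Q₂, by simp [hQ₁, hQ₂], ?_⟩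
    rw [div_add_div _ _ (algebraMap_ne_zero hQ₁0) (algebraMap_ne_zero hQ₂0)]
    simp only [map_add, map_mul]

theorem mem_regularAt_iff {x : RatFunc K} {b : K} : x ∈ regularAt b ↔ x.denom.eval b ≠ 0 := by
  refine ⟨?_, fun h => ⟨x.num, x.denom, h, x.num_div_denom.symm⟩⟩
  rintro ⟨P, Q, hQ, rfl⟩
  have hQ0 : Q ≠ 0 := by rintro rfl; simp at hQ
  obtain ⟨B, hB⟩ := (denom_dvd hQ0).mpr ⟨P, rfl⟩
  intro h
  exact hQ (by rw [hB, Polynomial.eval_mul, h, zero_mul])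

theorem algebraMap_mem_regularAt (P : K[X]) (b : K) : algebraMap K[X] (RatFunc K) P ∈ regularAt b :=
  ⟨P, 1, by simp, by simp⟩

theorem X_mem_regularAt (b : K) : (X : RatFunc K) ∈ regularAt b :=
  algebraMap_X (K := K) ▸ algebraMap_mem_regularAt _ b

theorem C_mem_regularAt (a b : K) : C a ∈ regularAt b :=
  algebraMap_C (K := K) a ▸ algebraMap_mem_regularAt _ b

theorem finite_setOf_not_mem_regularAt (x : RatFunc K) : {b | x ∉ regularAt b}.Finite := by
  simpa [mem_regularAt_iff] using finite_setOfPred_isRoot x.denom_ne_zero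

theorem coeffMap_div (c : K →+* L) (P Q : K[X]) :
    coeffMap c (algebraMap K[X] (RatFunc K) P / algebraMap K[X] (RatFunc K) Q) =
      algebraMap L[X] (RatFunc L) (P.map c) / algebraMap L[X] (RatFunc L) (Q.map c) := by
  rw [coeffMap, coe_mapRingHom_eq_coe_map, map_apply_div]
  rfl

theorem coeffMap_mem_regularAt (c : K →+* L) {x : RatFunc K} {b : K} (hx : x ∈ regularAt b) :
    coeffMap c x ∈ regularAt (c b) := by
  obtain ⟨P, Q, hQ, rfl⟩ := hx
  refine ⟨P.map c, Q.map c, ?_, coeffMap_div c P Q⟩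
  rwa [eval_map, eval₂_at_apply, _root_.map_ne_zero]

theorem X_pow_injective : Function.Injective fun n : ℕ => (X : RatFunc K) ^ n := by
  intro i j h
  simp only [← algebraMap_X, ← map_pow] at h
  simpa using congrArg natDegree (IsFractionRing.injective K[X] (RatFunc K) h)

theorem eval₂_pow_X_eq_expand (A : RatFunc K →+* L) (E : K[X]) (n : ℕ) :
    E.eval₂ (A.comp (algebraMap K (RatFunc K))) (A X ^ n) =
      A (algebraMap K[X] (RatFunc K) (expand K n E)) := by
  rw [← map_pow, ← hom_eval₂, coe_expand, hom_eval₂ _ Polynomial.C, ← Polynomial.algebraMap_eq,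
    ← IsScalarTower.algebraMap_eq, map_pow, algebraMap_X]

theorem coeffMap_mem_regularAt_pow_X (A : RatFunc K →+* L) (x : RatFunc K) {n : ℕ} (hn : 0 < n) :
    coeffMap (A.comp (algebraMap K (RatFunc K))) x ∈ regularAt (A X ^ n) := by
  refine ⟨x.num.map _, x.denom.map _, ?_, x.num_div_denom ▸ coeffMap_div _ _ _⟩
  rw [eval_map, eval₂_pow_X_eq_expand, _root_.map_ne_zero]
  exact algebraMap_ne_zero ((expand_ne_zero hn).mpr x.denom_ne_zero)

theorem coeffMap_mem_regularAt_of_sub_eq {ψ : K ≃+* K} {f R : RatFunc K} {c : K} {b : ℕ → K}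
    (hb : Function.Injective b) (hψb : ∀ j, ψ (b (j + 1)) = b j)
    (heq : (X - C c) * coeffMap (ψ : K →+* K) f - f = R) (hR : ∀ j, R ∈ regularAt (b (j + 1))) :
    coeffMap (ψ : K →+* K) f ∈ regularAt (b 0) := by
  set G := coeffMap (ψ : K →+* K) f
  have hstep (j : ℕ) (hG : G ∈ regularAt (b (j + 1))) : G ∈ regularAt (b j) := by
    have hf : f ∈ regularAt (b (j + 1)) := by
      rw [show f = (X - C c) * G - R by rw [← heq]; ring]
      exact sub_mem (mul_mem (sub_mem (X_mem_regularAt _) (C_mem_regularAt _ _)) hG) (hR j)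
    simpa [hψb] using coeffMap_mem_regularAt (ψ : K →+* K) hf
  by_contra h0
  have hpoles (j : ℕ) : G ∉ regularAt (b j) := Nat.rec h0 (fun j ih hG => ih (hstep j hG)) j
  exact Set.infinite_of_injective_forall_mem hb hpoles (finite_setOf_not_mem_regularAt G)

end RatFunc

theorem carlitz_twisted_f_regular_at_theta_general
    -- `q = p ^ m` is a prime power and `𝔽_q` is the field with `q` elements
    (p m q : ℕ) [Fact p.Prime] (hm : 0 < m) (hq : q = p ^ m)
    (Fq : Type*) [Field Fq]
    -- `k̄` is an algebraic closure of `k = 𝔽_q(θ)`, and `θ` is the image of the variable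
    (kbar : Type*) [Field kbar] [CharP kbar p] [PerfectRing kbar p]
    [Algebra (RatFunc Fq) kbar]
    (θ : kbar) (hθ : θ = algebraMap (RatFunc Fq) kbar RatFunc.X)
    -- `ψ : a ↦ a^{1/q}` is the inverse of the `q`-power Frobenius of `k̄`
    (ψ : kbar ≃+* kbar) (hψ : ψ = (iterateFrobeniusEquiv kbar p m).symm)
    -- the data `f`, `αᵢ`, `μᵢ`
    (s : ℕ) (α : Fin s → kbar) (μ : Fin s → RatFunc Fq)
    (f : RatFunc kbar)
    -- the σ-difference equation `(t − θ)·f⁽⁻¹⁾ − f = ∑ μᵢ·αᵢ⁽⁻¹⁾·(t − θ)`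
    (heq : (RatFunc.X - RatFunc.C θ) * RatFunc.coeffMap (ψ : kbar →+* kbar) f - f =
      ∑ i, RatFunc.coeffMap
          ((algebraMap (RatFunc Fq) kbar).comp (algebraMap Fq (RatFunc Fq))) (μ i) *
        RatFunc.C (ψ (α i)) * (RatFunc.X - RatFunc.C θ)) :
    -- `f⁽⁻¹⁾` is regular at `t = θ`:
    -- the denominator of `f⁽⁻¹⁾` in lowest terms does not vanish at `θ`
    Polynomial.eval θ (RatFunc.coeffMap (ψ : kbar →+* kbar) f).denom ≠ 0 := by
  set A := algebraMap (RatFunc Fq) kbar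
  have hq1 : 1 < q := hq ▸ Nat.one_lt_pow hm.ne' (Fact.out : p.Prime).one_lt
  have hψ_symm (x : kbar) : ψ.symm x = x ^ q := by
    rw [hψ, RingEquiv.symm_symm, iterateFrobeniusEquiv_apply, iterateFrobenius_def, hq]
  let b (j : ℕ) : kbar := θ ^ q ^ j
  rw [← RatFunc.mem_regularAt_iff, show θ = b 0 by simp [b]]
  refine RatFunc.coeffMap_mem_regularAt_of_sub_eq (c := θ) ?_ (fun j => ?_) heq (fun j => ?_)
  · intro i j h
    exact Nat.pow_right_injective hq1
      (RatFunc.X_pow_injective (A.injective (by simpa [b, hθ] using h)))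
  · rw [← ψ.apply_symm_apply (b j), hψ_symm, ← pow_mul, ← pow_succ]
  · refine Subring.sum_mem _ fun i _ => mul_mem (mul_mem ?_ (RatFunc.C_mem_regularAt _ _))
      (sub_mem (RatFunc.X_mem_regularAt _) (RatFunc.C_mem_regularAt _ _))
    rw [show b (j + 1) = A RatFunc.X ^ q ^ (j + 1) by rw [← hθ]]
    exact RatFunc.coeffMap_mem_regularAt_pow_X A (μ i) (by positivity)

/-- If `f ∈ k̄(t)`, nonzero `α₁, …, α_s ∈ k̄` and `μ₁, …, μ_s ∈ 𝔽_q(t)` satisfy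
`(t − θ)·f⁽⁻¹⁾ − f = ∑ μᵢ·αᵢ⁽⁻¹⁾·(t − θ)`, then the twisted rational function `f⁽⁻¹⁾` is regular at `t = θ`. -/
theorem carlitz_twisted_f_regular_at_theta
    -- `q = p ^ m` is a prime power and `𝔽_q` is the field with `q` elements
    (p m q : ℕ) [Fact p.Prime] (hm : 0 < m) (hq : q = p ^ m)
    (Fq : Type*) [Field Fq] [Fintype Fq] [CharP Fq p] (hcard : Fintype.card Fq = q)
    -- `k̄` is an algebraic closure of `k = 𝔽_q(θ)`, and `θ` is the image of the variable
    (kbar : Type*) [Field kbar] [CharP kbar p] [PerfectRing kbar p]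
    [Algebra (RatFunc Fq) kbar] [IsAlgClosure (RatFunc Fq) kbar]
    (θ : kbar) (hθ : θ = algebraMap (RatFunc Fq) kbar RatFunc.X)
    -- `ψ : a ↦ a^{1/q}` is the inverse of the `q`-power Frobenius of `k̄`
    (ψ : kbar ≃+* kbar) (hψ : ψ = (iterateFrobeniusEquiv kbar p m).symm)
    -- the data `f`, `αᵢ`, `μᵢ`
    (s : ℕ) (α : Fin s → kbar) (hα : ∀ i, α i ≠ 0) (μ : Fin s → RatFunc Fq)
    (f : RatFunc kbar)
    -- the σ-difference equation `(t − θ)·f⁽⁻¹⁾ − f = ∑ μᵢ·αᵢ⁽⁻¹⁾·(t − θ)`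
    (heq : (RatFunc.X - RatFunc.C θ) * RatFunc.coeffMap (ψ : kbar →+* kbar) f - f =
      ∑ i, RatFunc.coeffMap
          ((algebraMap (RatFunc Fq) kbar).comp (algebraMap Fq (RatFunc Fq))) (μ i) *
        RatFunc.C (ψ (α i)) * (RatFunc.X - RatFunc.C θ)) :
    -- `f⁽⁻¹⁾` is regular at `t = θ`:
    -- the denominator of `f⁽⁻¹⁾` in lowest terms does not vanish at `θ`
    Polynomial.eval θ (RatFunc.coeffMap (ψ : kbar →+* kbar) f).denom ≠ 0 :=
  carlitz_twisted_f_regular_at_theta_general p m q hm hq Fq kbar θ hθ ψ hψ s α μ f heq
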